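/- There is a commutative semiring R (one may take the Boolean semiring 𝔹 = ({0,1}, max, min, 0, 1)) such that no terminating old-model (Eiter–Kiesel) Semiring Turing Machine over R computes the conditional product function f_R; i.e., for every terminating old-model SRTM M over R there is an input x with ‖M‖(x) ≠ f_R(x). -/

import Mathlib

open scoped Classical

/-- An old-model (Eiter–Kiesel) Semiring Turing Machine over a semiring `R`
with alphabet symbols `A` (plus `Fin nE` extra tape symbols, among them the
blank).  Tape cells hold elements of `Σ ∪ R`, i.e. `(A ⊕ Fin nE) ⊕ R`.
Transitions carry a weight in `R`; `δ` may be infinite but must satisfy the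
three Eiter–Kiesel conditions. Directions: `true` = +1, `false` = −1. -/
structure OldSRTM (R : Type) (A : Type) where
  nQ : ℕ
  nE : ℕ
  blankE : Fin nE
  start : Fin nQ
  weights : Set R
  weights_fin : weights.Finite
  trans : Set ((Fin nQ × ((A ⊕ Fin nE) ⊕ R)) × (Fin nQ × ((A ⊕ Fin nE) ⊕ R)) × Bool × R)
  /-- (1) the machine cannot write or overwrite semiring values -/
  cond1 : ∀ t ∈ trans,
    ((∃ r : R, t.1.2 = Sum.inr r) ∨ (∃ r : R, t.2.1.2 = Sum.inr r)) → t.1.2 = t.2.1.2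
  /-- (2) weights come from `weights` or from under the head -/
  cond2 : ∀ t ∈ trans, t.2.2.2 ∈ weights ∨ t.1.2 = Sum.inr t.2.2.2
  /-- (3) the machine cannot discriminate semiring values -/
  cond3 : ∀ t ∈ trans, (∃ r : R, t.1.2 = Sum.inr r) →
    (∀ r' : R, ((t.1.1, Sum.inr r'), (t.2.1.1, Sum.inr r'), t.2.2.1, r') ∈ trans) ∨
    (∀ r' : R, ((t.1.1, Sum.inr r'), (t.2.1.1, Sum.inr r'), t.2.2.1, t.2.2.2) ∈ trans)

namespace OldSRTM

variable {R A : Type}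

abbrev Cell (M : OldSRTM R A) : Type := (A ⊕ Fin M.nE) ⊕ R

abbrev Trans (M : OldSRTM R A) : Type :=
  (Fin M.nQ × M.Cell) × (Fin M.nQ × M.Cell) × Bool × R

abbrev Config (M : OldSRTM R A) : Type := Fin M.nQ × (ℕ → M.Cell) × ℕ

def applicable (M : OldSRTM R A) (c : M.Config) : Set M.Trans :=
  {t | t ∈ M.trans ∧ t.1.1 = c.1 ∧ t.1.2 = c.2.1 c.2.2}

def stepTo (M : OldSRTM R A) (t : M.Trans) (c : M.Config) : M.Config :=
  ⟨t.2.1.1,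
    Function.update c.2.1 c.2.2 t.2.1.2,
    ((c.2.2 : ℤ) + (if t.2.2.1 then 1 else -1)).natAbs⟩

noncomputable def val [CommSemiring R] (M : OldSRTM R A) : ℕ → M.Config → R
  | 0, _ => 1
  | n + 1, c =>
    if M.applicable c = ∅ then 1
    else ∑ᶠ t ∈ M.applicable c, t.2.2.2 * val M n (M.stepTo t c)

def initTape (M : OldSRTM R A) (s : List (A ⊕ R)) : ℕ → M.Cell := fun i =>
  match s[i]? with
  | some (Sum.inl a) => Sum.inl (Sum.inl a)
  | some (Sum.inr r) => Sum.inr r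
  | none => Sum.inl (Sum.inr M.blankE)

def initConfig (M : OldSRTM R A) (s : List (A ⊕ R)) : M.Config :=
  ⟨M.start, M.initTape s, 0⟩

def StepRel (M : OldSRTM R A) (c c' : M.Config) : Prop :=
  ∃ t ∈ M.applicable c, c' = M.stepTo t c

def PathLen (M : OldSRTM R A) : ℕ → M.Config → M.Config → Prop
  | 0, c, c' => c' = c
  | n + 1, c, c'' => ∃ c', StepRel M c c' ∧ PathLen M n c' c''

def BoundedBy (M : OldSRTM R A) (ℓ : List (A ⊕ R) → ℕ) : Prop :=
  ∀ (s : List (A ⊕ R)) (n : ℕ) (c : M.Config),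
    PathLen M n (M.initConfig s) c → n ≤ ℓ s

def Terminating (M : OldSRTM R A) : Prop := ∃ ℓ, M.BoundedBy ℓ

noncomputable def output [CommSemiring R] (M : OldSRTM R A)
    (ℓ : List (A ⊕ R) → ℕ) (s : List (A ⊕ R)) : R :=
  val M (ℓ s) (M.initConfig s)

end OldSRTM

/-- `NP_old(R)`: functions computed by terminating old-model SRTMs over `R`
with polynomially bounded computation path lengths. -/
def NPold (R : Type) [CommSemiring R] (A : Type) [Fintype A]
    (f : List (A ⊕ R) → R) : Prop :=
  ∃ (M : OldSRTM R A) (ℓ : List (A ⊕ R) → ℕ) (p : Polynomial ℕ),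
    M.BoundedBy ℓ ∧ (∀ s, ℓ s ≤ p.eval s.length) ∧ ∀ s, f s = M.output ℓ s
open Classical in
/-- The conditional product function `f_R`: if the input is a block of
alphabet letters followed by an equally long block of semiring values, return
the product of the semiring values; otherwise return `0`. -/
noncomputable def condProd {R A : Type} [CommSemiring R] (x : List (A ⊕ R)) : R :=
  if ∃ (as : List A) (rs : List R),
      x = as.map Sum.inl ++ rs.map Sum.inr ∧ as.length = rs.length then
    (x.filterMap (fun e => match e with | Sum.inl _ => none | Sum.inr r => some r)).prod
  else 0

/-- The conditional product function cannot be computed by any terminating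
old-model SRTM over `R` (for any nonempty finite alphabet). -/
def CondProdUncomputableOld (R : Type) [CommSemiring R] : Prop :=
  ∀ (A : Type), Fintype A → Nonempty A →
    ∀ (M : OldSRTM R A) (ℓ : List (A ⊕ R) → ℕ), M.BoundedBy ℓ →
      ∃ x : List (A ⊕ R), M.output ℓ x ≠ condProd x

/-!
Over `ℕ`, and over any canonically ordered semiring without zero divisors, a computation has
nonzero value iff one of its branches along transitions of nonzero weight halts. On an input
`a^n 1^m` the machine can neither overwrite nor distinguish the `1`s, so inside the block it is a
two-way finite automaton on a unary word. Its behaviour on the block (where it may leave it,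
whether it may halt inside) takes finitely many values, so two block lengths `m < m + d` behave
alike. Cutting `d` cells out of the block then turns a halting branch on `a^(m+d) 1^(m+d)`, an
input of value `1`, into one on `a^(m+d) 1^m`, whose conditional product is `0`.
-/

open Function Relation

namespace OldSRTM

variable {R A : Type} (M : OldSRTM R A)

section NonzeroRuns

variable [Zero R]

def NonzeroStep (c c' : M.Config) : Prop :=
  ∃ t ∈ M.applicable c, t.2.2.2 ≠ 0 ∧ c' = M.stepTo t c

def HaltsNonzero (c : M.Config) : Prop :=
  ∃ c₁, ReflTransGen M.NonzeroStep c c₁ ∧ M.applicable c₁ = ∅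

variable {M}

theorem haltsNonzero_of_applicable_eq_empty {c : M.Config} (h : M.applicable c = ∅) :
    M.HaltsNonzero c :=
  ⟨c, .refl, h⟩

theorem HaltsNonzero.of_reflTransGen {c c' : M.Config} (hr : ReflTransGen M.NonzeroStep c c')
    (h : M.HaltsNonzero c') : M.HaltsNonzero c :=
  let ⟨c₁, hr', hc₁⟩ := h
  ⟨c₁, hr.trans hr', hc₁⟩

theorem haltsNonzero_iff {c : M.Config} :
    M.HaltsNonzero c ↔ M.applicable c = ∅ ∨
      ∃ t ∈ M.applicable c, t.2.2.2 ≠ 0 ∧ M.HaltsNonzero (M.stepTo t c) := by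
  constructor
  · rintro ⟨c₁, hr, hc₁⟩
    rcases hr.cases_head with rfl | ⟨c', ⟨t, ht, hw, rfl⟩, hr'⟩
    · exact .inl hc₁
    · exact .inr ⟨t, ht, hw, c₁, hr', hc₁⟩
  · rintro (h | ⟨t, ht, hw, h⟩)
    · exact haltsNonzero_of_applicable_eq_empty h
    · exact h.of_reflTransGen (.single ⟨t, ht, hw, rfl⟩)

end NonzeroRuns

/-- `val` sums with `finsum`, which is `0` on an infinite support. -/
theorem applicable_finite [Finite A] (c : M.Config) : (M.applicable c).Finite := by
  set x := c.2.1 c.2.2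
  have hval : {w : R | x = Sum.inr w}.Finite :=
    Set.Subsingleton.finite fun w hw w' hw' => Sum.inr_injective (hw.symm.trans hw')
  refine ((Set.finite_singleton (c.1, x)).prod ((Set.finite_univ.prod
    ((Set.finite_range Sum.inl).insert x)).prod (Set.finite_univ.prod
    (M.weights_fin.union hval)))).subset ?_
  rintro t ⟨ht, hq, hx⟩
  refine ⟨Prod.ext hq hx, ⟨trivial, ?_⟩, trivial, ?_⟩
  · rcases h : t.2.1.2 with y | w
    · exact .inr ⟨y, rfl⟩
    · exact .inl (by rw [← h]; exact (M.cond1 t ht (.inr ⟨w, h⟩)).symm.trans hx)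
  · rcases M.cond2 t ht with hw | hw
    · exact .inl hw
    · exact .inr (hx.symm.trans hw)

section Value

variable {M} [CommSemiring R] [PartialOrder R] [CanonicallyOrderedAdd R] [NoZeroDivisors R]
  [Nontrivial R] [Finite A]

theorem val_ne_zero_iff {n : ℕ} {c : M.Config} (hc : ∀ k c', M.PathLen k c c' → k ≤ n) :
    M.val n c ≠ 0 ↔ M.HaltsNonzero c := by
  induction n generalizing c with
  | zero =>
    refine ⟨fun _ => haltsNonzero_of_applicable_eq_empty ?_, fun _ => one_ne_zero⟩
    refine Set.eq_empty_of_forall_notMem fun t ht => ?_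
    have := hc 1 _ ⟨_, ⟨t, ht, rfl⟩, rfl⟩
    omega
  | succ n ih =>
    rw [val, haltsNonzero_iff]
    split_ifs with h
    · simp [h]
    · rw [finsum_mem_eq_finite_toFinset_sum _ (M.applicable_finite c), Ne,
        Finset.sum_eq_zero_iff]
      push Not
      simp only [Set.Finite.mem_toFinset, mul_ne_zero_iff, h, false_or]
      refine exists_congr fun t => and_congr_right fun ht => and_congr_right fun _ =>
        ih fun k c' hk => ?_
      have := hc (k + 1) c' ⟨_, ⟨t, ht, rfl⟩, hk⟩
      omega

theorem output_ne_zero_iff {ℓ : List (A ⊕ R) → ℕ} (hB : M.BoundedBy ℓ) (s : List (A ⊕ R)) :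
    M.output ℓ s ≠ 0 ↔ M.HaltsNonzero (M.initConfig s) :=
  val_ne_zero_iff (hB s)

end Value

theorem stepTo_tape (t : M.Trans) (c : M.Config) :
    (M.stepTo t c).2.1 = update c.2.1 c.2.2 t.2.1.2 :=
  rfl

theorem stepTo_tape_of_eq_inr {t : M.Trans} {c : M.Config} (ht : t ∈ M.applicable c) {j : ℕ}
    {r : R} (hj : c.2.1 j = Sum.inr r) : (M.stepTo t c).2.1 j = Sum.inr r := by
  obtain ⟨ht, -, hread⟩ := ht
  rw [stepTo_tape]
  by_cases hjc : j = c.2.2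
  · subst hjc
    rw [update_self, ← M.cond1 t ht (.inl ⟨r, hread.trans hj⟩), hread, hj]
  · rw [update_of_ne hjc, hj]

theorem stepTo_tape_of_read_inr {t : M.Trans} {c : M.Config} (ht : t ∈ M.applicable c) {r : R}
    (hr : c.2.1 c.2.2 = Sum.inr r) : (M.stepTo t c).2.1 = c.2.1 := by
  obtain ⟨ht, -, hread⟩ := ht
  rw [stepTo_tape, ← M.cond1 t ht (.inl ⟨r, hread.trans hr⟩), hread, update_eq_self]

def StuckOn (r : R) (q : Fin M.nQ) : Prop :=
  ∀ t ∈ M.trans, t.1 ≠ (q, Sum.inr r)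

def BlockAt (T : ℕ → M.Cell) (r : R) (b m : ℕ) : Prop :=
  ∀ i, 1 ≤ i → i ≤ m → T (b + i) = Sum.inr r

theorem applicable_eq_empty_iff_stuckOn {r : R} {T : ℕ → M.Cell} {q : Fin M.nQ} {p : ℕ}
    (hp : T p = Sum.inr r) : M.applicable (q, T, p) = ∅ ↔ M.StuckOn r q := by
  simp only [applicable, Set.eq_empty_iff_forall_notMem, StuckOn, hp]
  exact forall_congr' fun t => by simp only [Set.mem_ofPred_eq, ne_eq, Prod.ext_iff]; tauto

section Block

variable [Zero R]

/-- The head walking over a block of `m` cells holding `r`, at offsets `1, …, m`; offsets `0`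
and `m + 1` are the cells just outside. Since values cannot be overwritten, such a walk is a
two-way automaton on a unary word. -/
def BlockStep (r : R) (m : ℕ) (x y : Fin M.nQ × ℕ) : Prop :=
  1 ≤ x.2 ∧ x.2 ≤ m ∧ ∃ t ∈ M.trans, t.1 = (x.1, Sum.inr r) ∧ t.2.2.2 ≠ 0 ∧
    y = (t.2.1.1, if t.2.2.1 then x.2 + 1 else x.2 - 1)

def BlockHalts (r : R) (m : ℕ) (x : Fin M.nQ × ℕ) : Prop :=
  ∃ y, ReflTransGen (M.BlockStep r m) x y ∧ 1 ≤ y.2 ∧ y.2 ≤ m ∧ M.StuckOn r y.1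

def blockEntry (m : ℕ) (e : Bool) : ℕ := if e then m else 1

def blockExit (m : ℕ) (e : Bool) : ℕ := if e then m + 1 else 0

/-- All that a computation entering a block of length `m` (from the left if `e = false`) can
learn about it: where it may leave the block, and whether it may halt inside. -/
def blockBehaviour (r : R) (m : ℕ) : Fin M.nQ → Bool → (Fin M.nQ → Bool → Prop) × Prop :=
  fun q e =>
    (fun q' e' => ReflTransGen (M.BlockStep r m) (q, blockEntry m e) (q', blockExit m e'),
      M.BlockHalts r m (q, blockEntry m e))

theorem exists_blockBehaviour_eq (r : R) :
    ∃ m d, 1 ≤ m ∧ 1 ≤ d ∧ M.blockBehaviour r (m + d) = M.blockBehaviour r m := by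
  obtain ⟨x, y, hxy, h⟩ :=
    Finite.exists_ne_map_eq_of_infinite fun m => M.blockBehaviour r (m + 1)
  rcases hxy.lt_or_gt with hlt | hlt
  · obtain ⟨d, rfl⟩ := Nat.exists_eq_add_of_lt hlt
    refine ⟨x + 1, d + 1, by omega, by omega, ?_⟩
    rw [show x + 1 + (d + 1) = x + d + 1 + 1 by omega, h]
  · obtain ⟨d, rfl⟩ := Nat.exists_eq_add_of_lt hlt
    refine ⟨y + 1, d + 1, by omega, by omega, ?_⟩
    rw [show y + 1 + (d + 1) = y + d + 1 + 1 by omega, h]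

variable {M} {r : R} {b m : ℕ} {T : ℕ → M.Cell}

theorem BlockAt.of_nonzeroStep {c c' : M.Config} (hT : M.BlockAt c.2.1 r b m)
    (h : M.NonzeroStep c c') : M.BlockAt c'.2.1 r b m := by
  obtain ⟨t, ht, -, rfl⟩ := h
  exact fun i hi him => M.stepTo_tape_of_eq_inr ht (hT i hi him)

theorem nonzeroStep_of_blockStep (hT : M.BlockAt T r b m) {x y : Fin M.nQ × ℕ}
    (h : M.BlockStep r m x y) : M.NonzeroStep (x.1, T, b + x.2) (y.1, T, b + y.2) := by
  obtain ⟨hx, hxm, t, ht, hread, hw, rfl⟩ := h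
  have hT' := hT x.2 hx hxm
  have happ : t ∈ M.applicable (x.1, T, b + x.2) :=
    ⟨ht, congrArg Prod.fst hread, (congrArg Prod.snd hread).trans hT'.symm⟩
  refine ⟨t, happ, hw, ?_⟩
  rw [Prod.ext_iff, Prod.ext_iff]
  refine ⟨rfl, (M.stepTo_tape_of_read_inr happ hT').symm, ?_⟩
  simp only [stepTo]
  split <;> omega

theorem reflTransGen_of_blockStep (hT : M.BlockAt T r b m) {x y : Fin M.nQ × ℕ}
    (h : ReflTransGen (M.BlockStep r m) x y) :
    ReflTransGen M.NonzeroStep (x.1, T, b + x.2) (y.1, T, b + y.2) := by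
  induction h with
  | refl => rfl
  | tail _ hs ih => exact ih.tail (nonzeroStep_of_blockStep hT hs)

theorem haltsNonzero_of_blockHalts (hT : M.BlockAt T r b m) {x : Fin M.nQ × ℕ}
    (h : M.BlockHalts r m x) : M.HaltsNonzero (x.1, T, b + x.2) :=
  let ⟨_, hr, hy, hym, hstuck⟩ := h
  ⟨_, reflTransGen_of_blockStep hT hr, (M.applicable_eq_empty_iff_stuckOn (hT _ hy hym)).2 hstuck⟩

theorem blockStep_of_nonzeroStep (hT : M.BlockAt T r b m) {q : Fin M.nQ} {i : ℕ} (hi : 1 ≤ i)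
    (him : i ≤ m) {c : M.Config} (h : M.NonzeroStep (q, T, b + i) c) :
    ∃ y, M.BlockStep r m (q, i) y ∧ c = (y.1, T, b + y.2) := by
  obtain ⟨t, ht, hw, rfl⟩ := h
  have hT' := hT i hi him
  refine ⟨_, ⟨hi, him, t, ht.1, Prod.ext ht.2.1 (ht.2.2.trans hT'), hw, rfl⟩, ?_⟩
  rw [Prod.ext_iff, Prod.ext_iff]
  refine ⟨rfl, M.stepTo_tape_of_read_inr ht hT', ?_⟩
  simp only [stepTo]
  split <;> omega

end Block

section Compress

def stretch (k d p : ℕ) : ℕ := if p ≤ k then p else p + d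

def shrink (k d p : ℕ) : ℕ := if p ≤ k then p else p - d

theorem stretch_injective (k d : ℕ) : Injective (stretch k d) := by
  intro p p' h
  simp only [stretch] at h
  split_ifs at h <;> omega

theorem stretch_shrink {k d p : ℕ} (h : p ≤ k ∨ k + d < p) : stretch k d (shrink k d p) = p := by
  simp only [stretch, shrink]
  split_ifs <;> omega

/-- The configuration with the tape cells `k + 1, …, k + d` cut out. -/
def compress (k d : ℕ) (c : M.Config) : M.Config :=
  (c.1, c.2.1 ∘ stretch k d, shrink k d c.2.2)

variable {M} {k d : ℕ} {c : M.Config}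

theorem applicable_compress (h : c.2.2 ≤ k ∨ k + d < c.2.2) :
    M.applicable (M.compress k d c) = M.applicable c := by
  have hread : (M.compress k d c).2.1 (M.compress k d c).2.2 = c.2.1 c.2.2 := by
    simp only [compress, comp_apply, stretch_shrink h]
  unfold applicable
  rw [hread]
  rfl

theorem nonzeroStep_compress [Zero R] {c' : M.Config} (h : c.2.2 < k ∨ k + d < c.2.2)
    (hs : M.NonzeroStep c c') : M.NonzeroStep (M.compress k d c) (M.compress k d c') := by
  obtain ⟨t, ht, hw, rfl⟩ := hs
  have h' : c.2.2 ≤ k ∨ k + d < c.2.2 := h.imp_left le_of_lt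
  refine ⟨t, (applicable_compress h').symm ▸ ht, hw, Prod.ext rfl (Prod.ext ?_ ?_)⟩
  · have := update_comp_eq_of_injective c.2.1 (stretch_injective k d) (shrink k d c.2.2) t.2.1.2
    rwa [stretch_shrink h'] at this
  · simp only [compress, stepTo, shrink]
    split_ifs <;> omega

variable {r : R} {b m : ℕ} {T : ℕ → M.Cell}

theorem shrink_blockEntry (hm : 1 ≤ m) (e : Bool) :
    shrink (b + m) d (b + blockEntry (m + d) e) = b + blockEntry m e := by
  cases e <;> simp only [shrink, blockEntry] <;> split_ifs <;> omega

theorem shrink_blockExit (e : Bool) :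
    shrink (b + m) d (b + blockExit (m + d) e) = b + blockExit m e := by
  cases e <;> simp only [shrink, blockExit] <;> split_ifs <;> omega

theorem BlockAt.comp_stretch (hT : M.BlockAt T r b (m + d)) :
    M.BlockAt (T ∘ stretch (b + m) d) r b m := by
  intro i hi him
  rw [comp_apply, stretch, if_pos (by omega)]
  exact hT i hi (by omega)

end Compress

section Transfer

variable [Zero R]

def HaltsThroughBlock (r : R) (b m d : ℕ) (q : Fin M.nQ) (i : ℕ) (T : ℕ → M.Cell) : Prop :=
  M.BlockHalts r (m + d) (q, i) ∨ ∃ q' e,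
    ReflTransGen (M.BlockStep r (m + d)) (q, i) (q', blockExit (m + d) e) ∧
      M.HaltsNonzero (M.compress (b + m) d (q', T, b + blockExit (m + d) e))

/-- The invariant propagated backwards along a halting computation on a tape holding `r` at
`b + 1, …, b + m + d`. -/
def Transfers (r : R) (b m d : ℕ) (c : M.Config) : Prop :=
  ((c.2.2 ≤ b ∨ b + (m + d) < c.2.2) → M.HaltsNonzero (M.compress (b + m) d c)) ∧
    ∀ i, 1 ≤ i → i ≤ m + d → c.2.2 = b + i → M.HaltsThroughBlock r b m d c.1 i c.2.1

variable {M} {r : R} {b m d : ℕ} {T : ℕ → M.Cell}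

theorem transfers_of_applicable_eq_empty {c : M.Config} (hT : M.BlockAt c.2.1 r b (m + d))
    (h : M.applicable c = ∅) : M.Transfers r b m d c := by
  refine ⟨fun hc =>
    haltsNonzero_of_applicable_eq_empty ((applicable_compress (by omega)).trans h),
    fun i hi him hp => .inl ⟨(c.1, i), .refl, hi, him, ?_⟩⟩
  exact (M.applicable_eq_empty_iff_stuckOn (hT i hi him)).1 (by rw [← hp]; exact h)

theorem haltsThroughBlock_of_nonzeroStep (hT : M.BlockAt T r b (m + d)) {q : Fin M.nQ} {i : ℕ}
    (hi : 1 ≤ i) (him : i ≤ m + d) {c' : M.Config} (hs : M.NonzeroStep (q, T, b + i) c')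
    (h' : M.Transfers r b m d c') : M.HaltsThroughBlock r b m d q i T := by
  obtain ⟨y, hy, rfl⟩ := blockStep_of_nonzeroStep hT hi him hs
  have hy2 : (∃ e, y.2 = blockExit (m + d) e) ∨ (1 ≤ y.2 ∧ y.2 ≤ m + d) := by
    have : y.2 = 0 ∨ y.2 = m + d + 1 ∨ (1 ≤ y.2 ∧ y.2 ≤ m + d) := by
      obtain ⟨-, -, t, -, -, -, rfl⟩ := hy
      dsimp only
      split <;> omega
    rcases this with h | h | h
    exacts [.inl ⟨false, h⟩, .inl ⟨true, h⟩, .inr h]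
  rcases hy2 with ⟨e, he⟩ | ⟨h1, h2⟩
  · refine .inr ⟨y.1, e, ?_, ?_⟩ <;> rw [← he]
    · exact .single hy
    · refine h'.1 (show b + y.2 ≤ b ∨ b + (m + d) < b + y.2 from ?_)
      cases e <;> simp only [blockExit, Bool.false_eq_true, ↓reduceIte] at he <;> omega
  · rcases h'.2 y.2 h1 h2 rfl with ⟨z, hz, hz'⟩ | ⟨q', e, hr, hh⟩
    · exact .inl ⟨z, .head hy hz, hz'⟩
    · exact .inr ⟨q', e, .head hy hr, hh⟩

theorem haltsNonzero_compress_of_entry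
    (hbeh : M.blockBehaviour r (m + d) = M.blockBehaviour r m) (hm : 1 ≤ m)
    (hT : M.BlockAt T r b (m + d)) {q : Fin M.nQ} {e : Bool}
    (h : M.HaltsThroughBlock r b m d q (blockEntry (m + d) e) T) :
    M.HaltsNonzero (M.compress (b + m) d (q, T, b + blockEntry (m + d) e)) := by
  obtain ⟨hexit, hhalt⟩ := Prod.ext_iff.1 (congrFun (congrFun hbeh q) e)
  rw [compress, shrink_blockEntry hm]
  rcases h with h | ⟨q', e', hr, hh⟩
  · exact haltsNonzero_of_blockHalts hT.comp_stretch (hhalt.mp h)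
  · rw [compress, shrink_blockExit] at hh
    exact hh.of_reflTransGen
      (reflTransGen_of_blockStep hT.comp_stretch ((congrFun (congrFun hexit q') e').mp hr))

theorem haltsNonzero_compress_of_nonzeroStep
    (hbeh : M.blockBehaviour r (m + d) = M.blockBehaviour r m) (hm : 1 ≤ m) {c c' : M.Config}
    (hT : M.BlockAt c.2.1 r b (m + d)) (hc : c.2.2 ≤ b ∨ b + (m + d) < c.2.2)
    (hs : M.NonzeroStep c c') (h' : M.Transfers r b m d c') :
    M.HaltsNonzero (M.compress (b + m) d c) := by
  refine HaltsNonzero.of_reflTransGen (.single (nonzeroStep_compress (by omega) hs)) ?_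
  have hT' := hT.of_nonzeroStep hs
  obtain ⟨t, -, -, rfl⟩ := hs
  have hpos : ((M.stepTo t c).2.2 ≤ b ∨ b + (m + d) < (M.stepTo t c).2.2) ∨
      ∃ e, (M.stepTo t c).2.2 = b + blockEntry (m + d) e := by
    have : (M.stepTo t c).2.2 ≤ b ∨ b + (m + d) < (M.stepTo t c).2.2 ∨
        (M.stepTo t c).2.2 = b + 1 ∨ (M.stepTo t c).2.2 = b + (m + d) := by
      simp only [stepTo]
      split <;> omega
    rcases this with h | h | h | h
    exacts [.inl (.inl h), .inl (.inr h), .inr ⟨false, h⟩, .inr ⟨true, h⟩]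
  rcases hpos with hout | ⟨e, he⟩
  · exact h'.1 hout
  · have hentry : 1 ≤ blockEntry (m + d) e ∧ blockEntry (m + d) e ≤ m + d := by
      cases e <;> simp only [blockEntry, Bool.false_eq_true, ↓reduceIte] <;> omega
    have := haltsNonzero_compress_of_entry hbeh hm hT' (h'.2 _ hentry.1 hentry.2 he)
    rwa [← he] at this

theorem transfers_of_reflTransGen (hbeh : M.blockBehaviour r (m + d) = M.blockBehaviour r m)
    (hm : 1 ≤ m) {c c₁ : M.Config} (h : ReflTransGen M.NonzeroStep c c₁) (hc₁ : M.applicable c₁ = ∅)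
    (hT : M.BlockAt c.2.1 r b (m + d)) : M.Transfers r b m d c := by
  induction h using ReflTransGen.head_induction_on with
  | refl => exact transfers_of_applicable_eq_empty hT hc₁
  | head hs _ ih =>
    have ih := ih (hT.of_nonzeroStep hs)
    refine ⟨fun hc => haltsNonzero_compress_of_nonzeroStep hbeh hm hT hc hs ih,
      fun i hi him hp => haltsThroughBlock_of_nonzeroStep hT hi him ?_ ih⟩
    rwa [← hp]

theorem haltsNonzero_compress (hbeh : M.blockBehaviour r (m + d) = M.blockBehaviour r m)
    (hm : 1 ≤ m) {c : M.Config} (hT : M.BlockAt c.2.1 r b (m + d))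
    (hc : c.2.2 ≤ b ∨ b + (m + d) < c.2.2) (h : M.HaltsNonzero c) :
    M.HaltsNonzero (M.compress (b + m) d c) :=
  let ⟨_, hr, hc₁⟩ := h
  (transfers_of_reflTransGen hbeh hm hr hc₁ hT).1 hc

end Transfer

end OldSRTM

def blockInput {R A : Type} (a : A) (n : ℕ) (r : R) (m : ℕ) : List (A ⊕ R) :=
  List.replicate n (Sum.inl a) ++ List.replicate m (Sum.inr r)

theorem condProd_blockInput_self {R A : Type} [CommSemiring R] (a : A) (n : ℕ) :
    condProd (blockInput a n (1 : R) n) = 1 := by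
  rw [condProd, if_pos ⟨List.replicate n a, List.replicate n 1, by simp [blockInput], by simp⟩]
  simp [blockInput]

theorem condProd_blockInput_of_ne {R A : Type} [CommSemiring R] (a : A) {n m : ℕ} (r : R)
    (h : n ≠ m) : condProd (blockInput a n r m) = 0 := by
  rw [condProd, if_neg]
  rintro ⟨as, rs, hx, hlen⟩
  have hl := congrArg (List.filterMap Sum.getLeft?) hx
  have hr := congrArg (List.filterMap Sum.getRight?) hx
  simp only [blockInput, List.filterMap_append, List.filterMap_map, List.filterMap_replicate,
    comp_def, Sum.getLeft?_inl, Sum.getLeft?_inr, Sum.getRight?_inl, Sum.getRight?_inr,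
    List.filterMap_some, List.filterMap_none, List.append_nil, List.nil_append] at hl hr
  exact h (by simpa [← hl, ← hr] using hlen)

namespace OldSRTM

variable {R A : Type} (M : OldSRTM R A)

theorem initTape_blockInput (a : A) (n : ℕ) (r : R) (m p : ℕ) :
    M.initTape (blockInput a n r m) p =
      if p < n then Sum.inl (Sum.inl a) else if p < n + m then Sum.inr r
      else Sum.inl (Sum.inr M.blankE) := by
  simp only [initTape, blockInput, List.getElem?_append, List.getElem?_replicate,
    List.length_replicate]
  split_ifs <;> first | rfl | omega

theorem blockAt_initTape (a : A) {b : ℕ} (r : R) (m : ℕ) :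
    M.BlockAt (M.initTape (blockInput a (b + 1) r m)) r b m := by
  intro i hi him
  rw [initTape_blockInput, if_neg (by omega), if_pos (by omega)]

theorem compress_initConfig (a : A) {b m : ℕ} (d : ℕ) (r : R) (hm : 1 ≤ m) :
    M.compress (b + m) d (M.initConfig (blockInput a (b + 1) r (m + d))) =
      M.initConfig (blockInput a (b + 1) r m) := by
  refine Prod.ext rfl (Prod.ext (funext fun p => ?_) ?_)
  · simp only [compress, initConfig, comp_apply, stretch, initTape_blockInput]
    split_ifs <;> first | rfl | omega
  · simp [compress, initConfig, shrink]

end OldSRTM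

open OldSRTM in
theorem condProdUncomputableOld_of_canonicallyOrderedAdd (R : Type) [CommSemiring R]
    [PartialOrder R] [CanonicallyOrderedAdd R] [NoZeroDivisors R] [Nontrivial R] :
    CondProdUncomputableOld R := by
  intro A _ ⟨a⟩ M ℓ hB
  by_contra! hM
  obtain ⟨m, d, hm, hd, hbeh⟩ := M.exists_blockBehaviour_eq (1 : R)
  obtain ⟨b, hb⟩ : ∃ b, b + 1 = m + d := ⟨m + d - 1, by omega⟩
  have hlong : M.HaltsNonzero (M.initConfig (blockInput a (b + 1) (1 : R) (m + d))) := by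
    rw [← output_ne_zero_iff hB, hM, hb, condProd_blockInput_self]
    exact one_ne_zero
  have hshort := haltsNonzero_compress hbeh hm (M.blockAt_initTape a 1 (m + d))
    (.inl (Nat.zero_le b)) hlong
  rw [compress_initConfig M a d 1 hm, ← output_ne_zero_iff hB, hM,
    condProd_blockInput_of_ne a 1 (by omega)] at hshort
  exact hshort rfl

/-- There is a commutative semiring `R` such that the conditional product
function is not computable by any terminating old-model (Eiter–Kiesel) SRTM
over `R`. -/
theorem exists_semiring_condProd_not_oldSRTM_computable :
    ∃ (R : Type) (inst : CommSemiring R), @CondProdUncomputableOld R inst :=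
  ⟨ℕ, inferInstance, condProdUncomputableOld_of_canonicallyOrderedAdd ℕ⟩
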